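/- arXiv:1106.0541 — 4 statements merged into one kernel-verified Lean document; each statement's English description precedes it below -/
import Mathlib

section
/- Let F : ℝ → [0,1] be a CDF and let N ≥ M ≥ 1 be integers. Define Y as follows: given N i.i.d. random variables Z_1,...,Z_N with common CDF F, let Z_{(1)} ≤ ... ≤ Z_{(N)} be their order statistics, and let R be uniform on {N-M+1,...,N}, independent of the Z_i. Then the CDF of Y = Z_{(R)} satisfies F_Y(x) = Σ_{m=0}^{M-1} e_1(N,M,m) · F(x)^{N-m}, where e_1(N,M,m) = Σ_{ℓ=m}^{M-1} ((M-ℓ)/M) · C(N,ℓ) · C(ℓ,m) · (-1)^{ℓ-m}. -/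
open MeasureTheory ProbabilityTheory

/-- The `m`-th order statistic (1-indexed, `m`-th smallest) of `z : Fin N → ℝ`. -/
noncomputable def orderStat (N : ℕ) (z : Fin N → ℝ) (m : ℕ) : ℝ :=
  (List.insertionSort (· ≤ ·) (List.ofFn z)).getD (m - 1) 0

/-- The coefficients `e₁(N,M,m)`. -/
noncomputable def e1 (N M m : ℕ) : ℝ :=
  ∑ ℓ ∈ Finset.Icc m (M - 1),
    (((M : ℝ) - ℓ) / M) * (N.choose ℓ : ℝ) * (ℓ.choose m : ℝ) * (-1 : ℝ) ^ (ℓ - m)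

/-!
Given `R = ℓ`, the event `Z₍ℓ₎ ≤ x` says that at least `ℓ` of the `Zᵢ` are `≤ x`; by
independence this count is binomial with parameters `N` and `p = F x`, so the event has the
probability of a binomial tail. Averaging these tails over the top `M` ranks and exchanging the
two sums weights the term `C(N, m) p^(N-m) (1-p)^m` by `(M - m) / M`; expanding `(1-p)^m` by the
binomial theorem produces the coefficients `e₁(N, M, m)`.
-/

open Finset

theorem List.Pairwise.getElem_le_iff_lt_countP {α : Type*} [LinearOrder α] {l : List α}
    (hl : l.Pairwise (· ≤ ·)) (x : α) {k : ℕ} (hk : k < l.length) :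
    l[k] ≤ x ↔ k < l.countP (· ≤ x) := by
  induction l generalizing k with
  | nil => simp at hk
  | cons a t ih =>
    rw [List.pairwise_cons] at hl
    by_cases hax : a ≤ x
    · cases k with
      | zero => simp [hax]
      | succ k => simp [hax, ih hl.2 (by simpa using hk)]
    · have hgt : ∀ b ∈ a :: t, ¬ b ≤ x := by
        simp only [List.mem_cons, forall_eq_or_imp]
        exact ⟨hax, fun b hb hbx => hax ((hl.1 b hb).trans hbx)⟩
      rw [List.countP_eq_zero.2 (by simpa using hgt)]
      simpa using hgt _ (List.getElem_mem hk)

lemma orderStat_le_iff {N ℓ : ℕ} (z : Fin N → ℝ) (x : ℝ) (hℓ : ℓ ∈ Icc 1 N) :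
    orderStat N z ℓ ≤ x ↔ ℓ ≤ #{i | z i ≤ x} := by
  obtain ⟨hℓ1, hℓN⟩ := mem_Icc.1 hℓ
  have hperm := List.perm_insertionSort (· ≤ ·) (List.ofFn z)
  have hlen : ℓ - 1 < ((List.ofFn z).insertionSort (· ≤ ·)).length := by
    rw [hperm.length_eq, List.length_ofFn]; omega
  rw [orderStat, List.getD_eq_getElem _ _ hlen,
    (List.pairwise_insertionSort _ _).getElem_le_iff_lt_countP x hlen, hperm.countP_eq,
    List.ofFn_eq_map, List.countP_map]
  have hcount : (List.finRange N).countP (fun i => decide (z i ≤ x)) = #{i | z i ≤ x} := by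
    rw [List.countP_eq_length_filter]; rfl
  rw [Function.comp_def, hcount]
  omega

section IndependentEvents

variable {Ω ι β : Type*} [Fintype ι] {X : ι → Ω → β} {P : β → Prop} [DecidablePred P]

lemma setOf_filter_eq_iInter [DecidableEq ι] (S : Finset ι) :
    {ω | ({i | P (X i ω)} : Finset ι) = S} =
      ⋂ i, X i ⁻¹' (if i ∈ S then {b | P b} else {b | P b}ᶜ) := by
  ext ω
  simp only [Set.mem_ofPred_eq, Finset.ext_iff, mem_filter_univ, Set.mem_iInter,
    Set.mem_preimage]
  refine forall_congr' fun i => ?_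
  split_ifs with hi <;> simp [hi]

variable [MeasurableSpace Ω] [MeasurableSpace β]

lemma measurable_card_filter (hX : ∀ i, Measurable (X i)) (hP : MeasurableSet {b | P b}) :
    Measurable fun ω => #{i | P (X i ω)} := by
  simp only [card_filter]
  exact Finset.measurable_sum _ fun i _ =>
    Measurable.ite (hX i hP) measurable_const measurable_const

variable {μ : Measure Ω} [IsProbabilityMeasure μ] {p : ℝ}

lemma measureReal_filter_eq [DecidableEq ι] (hX : ∀ i, Measurable (X i)) (hXind : iIndepFun X μ)
    (hP : MeasurableSet {b | P b}) (hp : ∀ i, μ.real {ω | P (X i ω)} = p) (S : Finset ι) :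
    μ.real {ω | ({i | P (X i ω)} : Finset ι) = S} = p ^ #S * (1 - p) ^ (Fintype.card ι - #S) := by
  have hfactor : ∀ i, μ.real (X i ⁻¹' (if i ∈ S then {b | P b} else {b | P b}ᶜ))
      = if i ∈ S then p else 1 - p := by
    intro i
    split_ifs
    · exact hp i
    · rw [Set.preimage_compl, probReal_compl_eq_one_sub (hX i hP), ← hp i]; rfl
  rw [setOf_filter_eq_iInter, measureReal_def,
    hXind.meas_iInter fun i => ⟨_, by split_ifs; exacts [hP, hP.compl], rfl⟩, ENNReal.toReal_prod]
  simp only [← measureReal_def, hfactor]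
  rw [prod_ite, prod_const, prod_const, filter_mem_eq_inter, univ_inter, filter_not,
    filter_mem_eq_inter, univ_inter, ← compl_eq_univ_sdiff, card_compl]

lemma measureReal_card_filter_eq (hX : ∀ i, Measurable (X i)) (hXind : iIndepFun X μ)
    (hP : MeasurableSet {b | P b}) (hp : ∀ i, μ.real {ω | P (X i ω)} = p) (j : ℕ) :
    μ.real {ω | #{i | P (X i ω)} = j} =
      (Fintype.card ι).choose j * p ^ j * (1 - p) ^ (Fintype.card ι - j) := by
  classical
  have hunion : {ω | #{i | P (X i ω)} = j} =
      ⋃ S ∈ powersetCard j univ, {ω | ({i | P (X i ω)} : Finset ι) = S} := by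
    ext ω
    simp
  rw [hunion, measureReal_biUnion_finset, sum_congr rfl fun S hS => by
    rw [measureReal_filter_eq hX hXind hP hp, (mem_powersetCard_univ.1 hS)], sum_const,
    card_powersetCard, card_univ, nsmul_eq_mul, mul_assoc]
  · intro S _ T _ hST
    exact Set.disjoint_left.2 fun ω hS hT => hST (hS.symm.trans hT)
  · intro S _
    rw [setOf_filter_eq_iInter]
    exact MeasurableSet.iInter fun i => hX i (by split_ifs; exacts [hP, hP.compl])

lemma measureReal_le_card_filter_eq (hX : ∀ i, Measurable (X i)) (hXind : iIndepFun X μ)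
    (hP : MeasurableSet {b | P b}) (hp : ∀ i, μ.real {ω | P (X i ω)} = p) (k : ℕ) :
    μ.real {ω | k ≤ #{i | P (X i ω)}} = ∑ j ∈ Icc k (Fintype.card ι),
      (Fintype.card ι).choose j * p ^ j * (1 - p) ^ (Fintype.card ι - j) := by
  have hunion : {ω | k ≤ #{i | P (X i ω)}} =
      ⋃ j ∈ Icc k (Fintype.card ι), {ω | #{i | P (X i ω)} = j} := by
    ext ω
    simp [card_le_univ]
  rw [hunion, measureReal_biUnion_finset]
  · exact sum_congr rfl fun j _ => measureReal_card_filter_eq hX hXind hP hp j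
  · intro j _ j' _ hjj'
    exact Set.disjoint_left.2 fun ω hj hj' => hjj' (hj.symm.trans hj')
  · exact fun j _ => measurable_card_filter hX hP (measurableSet_singleton j)

end IndependentEvents

lemma ProbabilityTheory.IndepFun.measureReal_setOf_mem_eq_sum {Ω α κ : Type*}
    [MeasurableSpace Ω] [MeasurableSpace α] [MeasurableSpace κ] [MeasurableSingletonClass κ]
    {μ : Measure Ω} [IsFiniteMeasure μ] {V : Ω → α} {R : Ω → κ} (hind : IndepFun V R μ) (hV : Measurable V)
    (hR : Measurable R) {T : Finset κ} (hRT : ∀ ω, R ω ∈ T) {B : κ → Set α}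
    (hB : ∀ ℓ, MeasurableSet (B ℓ)) :
    μ.real {ω | V ω ∈ B (R ω)} = ∑ ℓ ∈ T, μ.real (V ⁻¹' B ℓ) * μ.real (R ⁻¹' {ℓ}) := by
  have hunion : {ω | V ω ∈ B (R ω)} = ⋃ ℓ ∈ T, V ⁻¹' B ℓ ∩ R ⁻¹' {ℓ} := by
    ext ω
    simp [hRT ω]
  rw [hunion, measureReal_biUnion_finset]
  · refine sum_congr rfl fun ℓ _ => ?_
    simp only [measureReal_def, ← ENNReal.toReal_mul,
      hind.measure_inter_preimage_eq_mul _ _ (hB ℓ) (measurableSet_singleton ℓ)]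
  · intro ℓ _ ℓ' _ hℓℓ'
    exact Set.disjoint_left.2 fun ω h h' => hℓℓ' (h.2.symm.trans h'.2)
  · exact fun ℓ _ => (hV (hB ℓ)).inter (hR (measurableSet_singleton ℓ))

lemma sum_Icc_sum_Icc_eq_sum_range {M N : ℕ} (hMN : M ≤ N) (f : ℕ → ℝ) :
    ∑ ℓ ∈ Icc (N - M + 1) N, ∑ j ∈ Icc ℓ N, f j = ∑ m ∈ range M, (M - m : ℝ) * f (N - m) := by
  induction M with
  | zero => simp
  | succ M ih =>
    have hinsert : Icc (N - (M + 1) + 1) N = insert (N - M) (Icc (N - M + 1) N) := by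
      ext; simp; omega
    have hreflect : ∑ j ∈ Icc (N - M) N, f j = ∑ m ∈ range (M + 1), f (N - m) := by
      refine sum_nbij' (fun j => N - j) (fun m => N - m) ?_ ?_ ?_ ?_ ?_ <;> intro j hj <;>
        simp at hj ⊢ <;> first | omega | (congr 1; omega)
    rw [hinsert, sum_insert (by simp), ih (by omega), hreflect, sum_range_succ, sum_range_succ]
    have hsplit (m : ℕ) :
        ((M + 1 : ℕ) - m : ℝ) * f (N - m) = (M - m) * f (N - m) + f (N - m) := by
      push_cast; ring
    simp only [hsplit, sum_add_distrib]
    ring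

lemma sum_range_sum_Icc_mul_choose_eq (c : ℕ → ℝ) {M N : ℕ} (hMN : M ≤ N) (p : ℝ) :
    ∑ m ∈ range M, (∑ ℓ ∈ Icc m (M - 1), c ℓ * ℓ.choose m * (-1) ^ (ℓ - m)) * p ^ (N - m)
      = ∑ ℓ ∈ range M, c ℓ * p ^ (N - ℓ) * (1 - p) ^ ℓ := by
  simp only [sum_mul]
  rw [sum_comm' (t' := range M) (s' := fun ℓ => range (ℓ + 1)) (by intro m ℓ; simp; omega)]
  refine sum_congr rfl fun ℓ hℓ => ?_
  rw [sub_eq_add_neg, add_pow, mul_sum]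
  refine sum_congr rfl fun m hm => ?_
  have : N - m = (N - ℓ) + (ℓ - m) := by simp at hℓ hm; omega
  rw [this, pow_add, neg_pow]
  ring

theorem stmt_0_general {Ω : Type*} [MeasurableSpace Ω] (μ : Measure Ω) [IsProbabilityMeasure μ]
    (N M : ℕ) (hMN : M ≤ N)
    (F : ℝ → ℝ)
    (Z : Fin N → Ω → ℝ) (hZmeas : ∀ i, Measurable (Z i))
    (hZindep : iIndepFun Z μ)
    (hZcdf : ∀ i x, (μ {ω | Z i ω ≤ x}).toReal = F x)
    (R : Ω → ℕ) (hRmeas : Measurable R)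
    (hRrange : ∀ ω, R ω ∈ Finset.Icc (N - M + 1) N)
    (hRunif : ∀ ℓ ∈ Finset.Icc (N - M + 1) N, (μ {ω | R ω = ℓ}).toReal = 1 / M)
    (hRZindep : IndepFun (fun ω => fun i => Z i ω) R μ)
    (Y : Ω → ℝ) (hY : ∀ ω, Y ω = orderStat N (fun i => Z i ω) (R ω)) :
    ∀ x, (μ {ω | Y ω ≤ x}).toReal =
      ∑ m ∈ Finset.range M, e1 N M m * F x ^ (N - m) := by
  intro x
  set B : ℕ → Set (Fin N → ℝ) := fun ℓ => {z | ℓ ≤ #{i | z i ≤ x}}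
  have hB (ℓ : ℕ) : MeasurableSet (B ℓ) :=
    measurable_card_filter (X := fun i (z : Fin N → ℝ) => z i) (fun i => measurable_pi_apply i)
      measurableSet_Iic measurableSet_Ici
  have hYx : {ω | Y ω ≤ x} = {ω | (fun i => Z i ω) ∈ B (R ω)} := by
    ext ω
    simp only [Set.mem_ofPred_eq, hY, B,
      orderStat_le_iff _ x (Icc_subset_Icc_left (by omega) (hRrange ω))]
  calc μ.real {ω | Y ω ≤ x}
      = ∑ ℓ ∈ Icc (N - M + 1) N, μ.real {ω | ℓ ≤ #{i | Z i ω ≤ x}} * μ.real (R ⁻¹' {ℓ}) := by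
        rw [hYx, hRZindep.measureReal_setOf_mem_eq_sum (measurable_pi_lambda _ hZmeas) hRmeas
          hRrange hB]
        rfl
    _ = ∑ ℓ ∈ Icc (N - M + 1) N,
          (∑ j ∈ Icc ℓ N, N.choose j * F x ^ j * (1 - F x) ^ (N - j)) * (1 / M) := by
        refine sum_congr rfl fun ℓ hℓ => ?_
        rw [measureReal_le_card_filter_eq hZmeas hZindep measurableSet_Iic (fun i => hZcdf i x),
          Fintype.card_fin]
        exact congrArg _ (hRunif ℓ hℓ)
    _ = ∑ m ∈ range M, (M - m) / M * N.choose m * F x ^ (N - m) * (1 - F x) ^ m := by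
        rw [← sum_mul, sum_Icc_sum_Icc_eq_sum_range hMN, sum_mul]
        refine sum_congr rfl fun m hm => ?_
        rw [Nat.choose_symm (by simp at hm; omega), Nat.sub_sub_self (by simp at hm; omega)]
        ring
    _ = ∑ m ∈ range M, e1 N M m * F x ^ (N - m) :=
        (sum_range_sum_Icc_mul_choose_eq (fun ℓ => (M - ℓ) / M * N.choose ℓ) hMN (F x)).symm

/-- if `Z₁,…,Z_N` are i.i.d. with CDF `F`, `R` is uniform on
`{N-M+1,…,N}` independent of the `Zᵢ`, and `Y = Z₍R₎`, then
`F_Y(x) = ∑_{m=0}^{M-1} e₁(N,M,m) F(x)^{N-m}`. -/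
theorem stmt_0 {Ω : Type*} [MeasurableSpace Ω] (μ : Measure Ω) [IsProbabilityMeasure μ]
    (N M : ℕ) (hM : 1 ≤ M) (hMN : M ≤ N)
    (F : ℝ → ℝ) (hFmono : Monotone F) (hFrange : ∀ x, F x ∈ Set.Icc (0 : ℝ) 1)
    (Z : Fin N → Ω → ℝ) (hZmeas : ∀ i, Measurable (Z i))
    (hZindep : iIndepFun Z μ)
    (hZcdf : ∀ i x, (μ {ω | Z i ω ≤ x}).toReal = F x)
    (R : Ω → ℕ) (hRmeas : Measurable R)
    (hRrange : ∀ ω, R ω ∈ Finset.Icc (N - M + 1) N)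
    (hRunif : ∀ ℓ ∈ Finset.Icc (N - M + 1) N, (μ {ω | R ω = ℓ}).toReal = 1 / M)
    (hRZindep : IndepFun (fun ω => fun i => Z i ω) R μ)
    (Y : Ω → ℝ) (hY : ∀ ω, Y ω = orderStat N (fun i => Z i ω) (R ω)) :
    ∀ x, (μ {ω | Y ω ≤ x}).toReal =
      ∑ m ∈ Finset.range M, e1 N M m * F x ^ (N - m) :=
  stmt_0_general μ N M hMN F Z hZmeas hZindep hZcdf R hRmeas hRrange hRunif hRZindep Y hY
end

section
/- For integers N ≥ 1 and 0 ≤ m ≤ N-1, define e_1(N,N,m) = Σ_{ℓ=m}^{N-1} ((N-ℓ)/N) · C(N,ℓ) · C(ℓ,m) · (-1)^{ℓ-m}. Then e_1(N,N,m) = 1 if m = N-1 and e_1(N,N,m) = 0 if m < N-1. -/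
/-!
With `n = N - 1`, absorption gives `(N - ℓ) / N * C(N, ℓ) = C(n, ℓ)`, and the subset-of-subset
identity `C(n, ℓ) C(ℓ, m) = C(n, m) C(n - m, ℓ - m)` turns the sum into `C(n, m)` times the
alternating sum of row `n - m` of Pascal's triangle, which vanishes unless `n = m`.
-/

open Finset

theorem Nat.cast_sub_div_mul_choose {K : Type*} [Field K] [CharZero K] {N : ℕ} (hN : 0 < N)
    (ℓ : ℕ) : ((N : K) - ℓ) / N * N.choose ℓ = (N - 1).choose ℓ := by
  obtain ⟨n, rfl⟩ : ∃ n, N = n + 1 := ⟨N - 1, by omega⟩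
  rw [Nat.add_sub_cancel, div_mul_eq_mul_div, div_eq_iff (Nat.cast_ne_zero.mpr n.succ_ne_zero)]
  rcases le_or_gt ℓ (n + 1) with hℓ | hℓ
  · have := congrArg (Nat.cast : ℕ → K) (Nat.choose_mul_succ_eq n ℓ)
    push_cast [hℓ] at this ⊢
    linear_combination -this
  · simp [Nat.choose_eq_zero_of_lt hℓ, Nat.choose_eq_zero_of_lt (Nat.lt_of_succ_lt hℓ)]

theorem alternating_sum_range_choose {R : Type*} [Ring R] (n : ℕ) :
    ∑ k ∈ range (n + 1), ((-1) ^ k * n.choose k : R) = if n = 0 then 1 else 0 := by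
  have := congrArg (Int.cast : ℤ → R) (Int.alternating_sum_range_choose (n := n))
  push_cast at this
  simpa using this

theorem sum_Icc_choose_mul_choose_mul_neg_one_pow {R : Type*} [CommRing R] (n m : ℕ) :
    ∑ ℓ ∈ Icc m n, (n.choose ℓ * ℓ.choose m * (-1) ^ (ℓ - m) : R) = if m = n then 1 else 0 := by
  rcases le_or_gt m n with hmn | hmn
  · obtain ⟨d, rfl⟩ := Nat.exists_eq_add_of_le hmn
    calc ∑ ℓ ∈ Icc m (m + d), ((m + d).choose ℓ * ℓ.choose m * (-1) ^ (ℓ - m) : R)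
        = ∑ k ∈ range (d + 1), ((m + d).choose (m + k) * (m + k).choose m * (-1) ^ k : R) := by
          rw [← Ico_add_one_right_eq_Icc, sum_Ico_eq_sum_range]
          simp only [add_assoc, Nat.add_sub_cancel_left]
      _ = (m + d).choose m * ∑ k ∈ range (d + 1), ((-1) ^ k * d.choose k : R) := by
          rw [mul_sum]
          refine sum_congr rfl fun k _ => ?_
          have := congrArg (Nat.cast : ℕ → R)
            (Nat.choose_mul (n := m + d) (k := m + k) (s := m) (Nat.le_add_right m k))
          simp only [Nat.add_sub_cancel_left, Nat.cast_mul] at this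
          rw [this]
          ring
      _ = if m = m + d then 1 else 0 := by
          rw [alternating_sum_range_choose]
          rcases d with _ | d <;> simp
  · simp [Icc_eq_empty_of_lt hmn, hmn.ne']

theorem stmt_1_general (N : ℕ) (hN : 1 ≤ N) (m : ℕ) :
    (∑ ℓ ∈ Finset.Icc m (N - 1),
        (((N : ℝ) - ℓ) / N) * (N.choose ℓ) * (ℓ.choose m) * (-1 : ℝ) ^ (ℓ - m)) =
      if m = N - 1 then 1 else 0 := by
  simp_rw [Nat.cast_sub_div_mul_choose hN]
  exact sum_Icc_choose_mul_choose_mul_neg_one_pow (N - 1) m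

/-- e₁(N,N,m) = 1 if m = N-1 and 0 otherwise. -/
theorem stmt_1 (N : ℕ) (hN : 1 ≤ N) (m : ℕ) (hm : m ≤ N - 1) :
    (∑ ℓ ∈ Finset.Icc m (N - 1),
        (((N : ℝ) - ℓ) / N) * (N.choose ℓ) * (ℓ.choose m) * (-1 : ℝ) ^ (ℓ - m)) =
      if m = N - 1 then 1 else 0 :=
  stmt_1_general N hN m
end

section
/- Let 1 ≤ M ≤ N be integers and F : ℝ → [0,1] a CDF. The mixture Σ_{m=N-M+1}^{N} (1/M) · I_{F(x)}(m, N-m+1), where I_p(a,b) = Σ_{ℓ=a}^{a+b-1} C(a+b-1,ℓ) p^ℓ (1-p)^{a+b-1-ℓ} is the regularized incomplete Beta function at integer arguments, equals Σ_{ℓ=0}^{M-1} ((M-ℓ)/M) · C(N,ℓ) · F(x)^{N-ℓ} · (1-F(x))^ℓ. -/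
/-!
Writing `I_p(m, N-m+1)` as the upper binomial tail `∑_{ℓ ≥ m} C(N,ℓ) p^ℓ (1-p)^{N-ℓ}` and
exchanging the two sums, the binomial term of index `ℓ` is counted once for every
`m ∈ [N-M+1, ℓ]`, i.e. `M - (N - ℓ)` times. Substituting `ℓ ↦ N - ℓ` gives the right-hand side.
-/

/-- The regularized incomplete Beta function at integer arguments:
`I_p(a,b) = ∑_{ℓ=a}^{a+b-1} C(a+b-1,ℓ) p^ℓ (1-p)^{a+b-1-ℓ}`. -/
noncomputable def regIncBeta (p : ℝ) (a b : ℕ) : ℝ :=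
  ∑ ℓ ∈ Finset.Icc a (a + b - 1),
    ((a + b - 1).choose ℓ : ℝ) * p ^ ℓ * (1 - p) ^ (a + b - 1 - ℓ)

open Finset

theorem regIncBeta_eq_sum_Icc {m N : ℕ} (hmN : m ≤ N) (p : ℝ) :
    regIncBeta p m (N - m + 1) = ∑ ℓ ∈ Icc m N, (N.choose ℓ : ℝ) * p ^ ℓ * (1 - p) ^ (N - ℓ) := by
  rw [regIncBeta, show m + (N - m + 1) - 1 = N by omega]

theorem sum_Icc_sum_Icc_eq_sum_smul {δ : Type*} [AddCommMonoid δ] (f : ℕ → δ) (a N : ℕ) :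
    ∑ m ∈ Icc a N, ∑ ℓ ∈ Icc m N, f ℓ = ∑ ℓ ∈ Icc a N, (ℓ + 1 - a) • f ℓ := by
  rw [sum_comm' (t' := Icc a N) (s' := fun ℓ => Icc a ℓ) (by intro m ℓ; simp only [mem_Icc]; omega)]
  simp only [sum_const, Nat.card_Icc]

theorem stmt_4_general (N M : ℕ) (hMN : M ≤ N) (F : ℝ → ℝ) (x : ℝ) :
    (∑ m ∈ Finset.Icc (N - M + 1) N, (1 / (M : ℝ)) * regIncBeta (F x) m (N - m + 1)) =
      ∑ ℓ ∈ Finset.range M,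
        (((M : ℝ) - ℓ) / M) * (N.choose ℓ : ℝ) * F x ^ (N - ℓ) * (1 - F x) ^ ℓ := by
  set p := F x
  have hmultiplicity :
      ∀ ℓ ∈ Icc (N - M + 1) N, ((ℓ + 1 - (N - M + 1) : ℕ) : ℝ) = M - (N - ℓ : ℕ) := by
    intro ℓ hℓ
    rw [mem_Icc] at hℓ
    rw [show ℓ + 1 - (N - M + 1) = M - (N - ℓ) by omega, Nat.cast_sub (by omega)]
  calc _ = 1 / (M : ℝ) * ∑ m ∈ Icc (N - M + 1) N,
          ∑ ℓ ∈ Icc m N, (N.choose ℓ : ℝ) * p ^ ℓ * (1 - p) ^ (N - ℓ) := by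
        rw [mul_sum]
        refine sum_congr rfl fun m hm => ?_
        rw [regIncBeta_eq_sum_Icc (mem_Icc.1 hm).2]
    _ = ∑ ℓ ∈ Icc (N - M + 1) N, ((M : ℝ) - (N - ℓ : ℕ)) / M * (N.choose (N - ℓ) : ℝ) *
          p ^ (N - (N - ℓ)) * (1 - p) ^ (N - ℓ) := by
        rw [sum_Icc_sum_Icc_eq_sum_smul, mul_sum]
        refine sum_congr rfl fun ℓ hℓ => ?_
        rw [nsmul_eq_mul, hmultiplicity ℓ hℓ, Nat.choose_symm (mem_Icc.1 hℓ).2,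
          Nat.sub_sub_self (mem_Icc.1 hℓ).2]
        ring
    _ = _ := by
        rw [← Ico_add_one_right_eq_Icc, show N - M + 1 = N + 1 - M by omega,
          sum_Ico_reflect (fun k => ((M : ℝ) - k) / M * (N.choose k : ℝ) * p ^ (N - k) * (1 - p) ^ k)
            _ le_rfl, Nat.sub_self, Nat.sub_sub_self (by omega), range_eq_Ico]

/-- the uniform mixture of the CDFs of the top-M order statistics equals
`∑_{ℓ=0}^{M-1} ((M-ℓ)/M) C(N,ℓ) F(x)^{N-ℓ} (1-F(x))^ℓ`. -/
theorem stmt_4 (N M : ℕ) (hM : 1 ≤ M) (hMN : M ≤ N) (F : ℝ → ℝ)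
    (hF : ∀ x, F x ∈ Set.Icc (0 : ℝ) 1) (x : ℝ) :
    (∑ m ∈ Finset.Icc (N - M + 1) N, (1 / (M : ℝ)) * regIncBeta (F x) m (N - m + 1)) =
      ∑ ℓ ∈ Finset.range M,
        (((M : ℝ) - ℓ) / M) * (N.choose ℓ : ℝ) * F x ^ (N - ℓ) * (1 - F x) ^ ℓ :=
  stmt_4_general N M hMN F x
end

section
/- For x > 0 and nonnegative integer n, ∫_0^∞ z^n e^{-xz} ln(1+z) dz = n! e^x Σ_{ℓ=1}^{n+1} Γ(ℓ - n - 1, x) / x^ℓ, where Γ(a,x) is the upper incomplete gamma function. -/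
/-!
Write `I n = ∫₀^∞ zⁿ e^{-xz} log(1+z) dz` and `K n = ∫₀^∞ zⁿ e^{-xz} (1+z)⁻¹ dz`. The fundamental
theorem of calculus for `zⁿ e^{-xz} log(1+z)`, which vanishes at `0` and at `∞`, gives
`x I n = n I (n-1) + K n`, and this recursion unwinds to `I n = n!/x^{n+1} ∑_{k ≤ n} xᵏ K k / k!`.
The substitution `t = x(1+z)` gives `K 0 = eˣ Γ(0,x)`; together with `K (k+1) = k!/x^{k+1} - K k`
and `Γ(a+1,x) = a Γ(a,x) + xᵃ e^{-x}` this yields `K k = k! eˣ Γ(-k,x)`, and the substitution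
`ℓ = n+1-k` in the sum gives the formula.
-/

open MeasureTheory Set Real Filter Asymptotics
open scoped Nat

noncomputable def upperIncGamma (a x : ℝ) : ℝ :=
  ∫ t in Set.Ioi x, t ^ (a - 1) * Real.exp (-t)

theorem integrableOn_Ioi_of_isBigO_rpow_mul_exp_neg {f : ℝ → ℝ} {a s c : ℝ} (hc : 0 < c)
    (hf : ContinuousOn f (Ici a)) (hO : f =O[atTop] fun z => z ^ s * exp (-c * z)) :
    IntegrableOn f (Ioi a) := by
  refine integrable_of_isBigO_exp_neg (half_pos hc) hf (hO.trans ?_)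
  have h := (isLittleO_rpow_exp_pos_mul_atTop s (half_pos hc)).isBigO.mul
    (isBigO_refl (fun z => exp (-c * z)) atTop)
  refine h.congr_right fun z => ?_
  rw [← exp_add]
  ring_nf

theorem isBigO_pow_mul_exp_neg_mul_mul {g : ℝ → ℝ} (c : ℝ) (n : ℕ)
    (hg : g =O[atTop] fun z => z) :
    (fun z => z ^ n * exp (-c * z) * g z) =O[atTop]
      fun z => z ^ ((n + 1 : ℕ) : ℝ) * exp (-c * z) := by
  refine ((isBigO_refl (fun z => z ^ n * exp (-c * z)) atTop).mul hg).congr_right fun z => ?_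
  rw [rpow_natCast]
  ring

theorem isBigO_log_one_add_atTop : (fun z : ℝ => log (1 + z)) =O[atTop] fun z => z := by
  refine IsBigO.of_bound 1 ?_
  filter_upwards [eventually_ge_atTop 0] with z hz
  rw [one_mul, norm_of_nonneg (log_nonneg (by linarith)), norm_of_nonneg hz]
  linarith [log_le_sub_one_of_pos (by linarith : 0 < 1 + z)]

theorem isBigO_inv_one_add_atTop : (fun z : ℝ => (1 + z)⁻¹) =O[atTop] fun z => z := by
  refine IsBigO.of_bound 1 ?_
  filter_upwards [eventually_ge_atTop 1] with z hz
  rw [one_mul, norm_inv, norm_of_nonneg (by linarith), norm_of_nonneg (by linarith)]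
  exact (inv_le_one_of_one_le₀ (by linarith)).trans hz

theorem integrableOn_pow_mul_exp_neg_mul_mul {g : ℝ → ℝ} {c : ℝ} (hc : 0 < c) (n : ℕ)
    (hg : ContinuousOn g (Ici 0)) (hgO : g =O[atTop] fun z => z) :
    IntegrableOn (fun z => z ^ n * exp (-c * z) * g z) (Ioi 0) :=
  integrableOn_Ioi_of_isBigO_rpow_mul_exp_neg hc (by fun_prop)
    (isBigO_pow_mul_exp_neg_mul_mul c n hgO)

theorem continuousOn_log_one_add : ContinuousOn (fun z : ℝ => log (1 + z)) (Ici 0) :=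
  ContinuousOn.log (by fun_prop) fun z hz => by linarith [mem_Ici.mp hz]

theorem continuousOn_inv_one_add : ContinuousOn (fun z : ℝ => (1 + z)⁻¹) (Ici 0) :=
  ContinuousOn.inv₀ (by fun_prop) fun z hz => by linarith [mem_Ici.mp hz]

theorem integrableOn_rpow_mul_exp_neg {x : ℝ} (hx : 0 < x) (a : ℝ) :
    IntegrableOn (fun t => t ^ a * exp (-t)) (Ioi x) := by
  refine integrableOn_Ioi_of_isBigO_rpow_mul_exp_neg (s := a) one_pos ?_ ?_
  · exact fun t ht => ((continuousAt_rpow_const t a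
      (Or.inl (hx.trans_le ht).ne')).mul (by fun_prop)).continuousWithinAt
  · simp only [neg_mul, one_mul]
    exact isBigO_refl _ _

theorem upperIncGamma_add_one {x : ℝ} (hx : 0 < x) (a : ℝ) :
    upperIncGamma (a + 1) x = a * upperIncGamma a x + x ^ a * exp (-x) := by
  have hderiv : ∀ t ∈ Ici x, HasDerivAt (fun t => t ^ a * exp (-t))
      (a * (t ^ (a - 1) * exp (-t)) - t ^ a * exp (-t)) t := fun t ht =>
    ((hasDerivAt_rpow_const (Or.inl (hx.trans_le ht).ne')).mul
      (hasDerivAt_neg t).exp).congr_deriv (by ring)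
  have hlim : Tendsto (fun t => t ^ a * exp (-t)) atTop (nhds 0) := by
    simpa using tendsto_rpow_mul_exp_neg_mul_atTop_nhds_zero a 1 one_pos
  have hint := (integrableOn_rpow_mul_exp_neg hx (a - 1)).const_mul a
  have key := integral_Ioi_of_hasDerivAt_of_tendsto' hderiv
    (hint.sub (integrableOn_rpow_mul_exp_neg hx a)) hlim
  rw [integral_sub hint (integrableOn_rpow_mul_exp_neg hx a), integral_const_mul] at key
  rw [upperIncGamma, upperIncGamma, add_sub_cancel_right]
  linarith

theorem upperIncGamma_eq_mul_integral_one_add_rpow {x : ℝ} (hx : 0 < x) (a : ℝ) :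
    upperIncGamma a x = x ^ a * exp (-x) * ∫ z in Ioi 0, exp (-x * z) * (1 + z) ^ (a - 1) := by
  have himage : (fun z => x * z + x) '' Ioi 0 = Ioi x := by
    rw [← image_image (· + x) (x * ·), image_mul_left_Ioi hx, image_add_const_Ioi]
    simp
  have hsubst := integral_image_eq_integral_abs_deriv_smul (measurableSet_Ioi (a := (0 : ℝ)))
    (fun z _ => ((hasDerivAt_id' z).const_mul x |>.add_const x).hasDerivWithinAt)
    (fun z _ w _ h => mul_left_cancel₀ hx.ne' (add_right_cancel h))
    (fun t => t ^ (a - 1) * exp (-t))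
  rw [himage] at hsubst
  rw [upperIncGamma, hsubst, ← integral_const_mul]
  refine setIntegral_congr_fun measurableSet_Ioi fun z hz => ?_
  have h1z : 0 ≤ 1 + z := by linarith [mem_Ioi.mp hz]
  rw [smul_eq_mul, mul_one, abs_of_pos hx, show x * z + x = x * (1 + z) by ring,
    mul_rpow hx.le h1z, rpow_sub_one hx.ne', show -(x * (1 + z)) = -x + -x * z by ring, exp_add]
  field_simp

theorem integral_pow_mul_exp_neg_mul_Ioi {x : ℝ} (hx : 0 < x) (n : ℕ) :
    ∫ z in Ioi 0, z ^ n * exp (-x * z) = n ! / x ^ (n + 1) := by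
  have h := integral_rpow_mul_exp_neg_mul_Ioi (a := n + 1) (by positivity) hx
  simp only [add_sub_cancel_right, rpow_natCast, ← neg_mul] at h
  rw [h, Gamma_nat_eq_factorial, ← Nat.cast_succ, rpow_natCast, one_div, inv_pow, inv_mul_eq_div]

noncomputable def logMoment (x : ℝ) (n : ℕ) : ℝ :=
  ∫ z in Ioi 0, z ^ n * exp (-x * z) * log (1 + z)

noncomputable def invMoment (x : ℝ) (n : ℕ) : ℝ :=
  ∫ z in Ioi 0, z ^ n * exp (-x * z) * (1 + z)⁻¹

-- At `n = 0` the truncated `n - 1` is harmless: its coefficient is `0`.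
theorem mul_logMoment {x : ℝ} (hx : 0 < x) (n : ℕ) :
    x * logMoment x n = n * logMoment x (n - 1) + invMoment x n := by
  have hderiv : ∀ z ∈ Ici (0 : ℝ), HasDerivAt (fun z => z ^ n * exp (-x * z) * log (1 + z))
      (n * (z ^ (n - 1) * exp (-x * z) * log (1 + z)) - x * (z ^ n * exp (-x * z) * log (1 + z))
        + z ^ n * exp (-x * z) * (1 + z)⁻¹) z := by
    intro z hz
    have h1z : 1 + z ≠ 0 := by linarith [mem_Ici.mp hz]
    exact (((hasDerivAt_pow n z).mul ((hasDerivAt_id' z).const_mul (-x)).exp).mul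
      (((hasDerivAt_id' z).const_add 1).log h1z)).congr_deriv (by simp only [Pi.mul_apply]; ring)
  have hlim : Tendsto (fun z => z ^ n * exp (-x * z) * log (1 + z)) atTop (nhds 0) :=
    (isBigO_pow_mul_exp_neg_mul_mul x n isBigO_log_one_add_atTop).trans_tendsto
      (tendsto_rpow_mul_exp_neg_mul_atTop_nhds_zero _ x hx)
  have hlog (m : ℕ) := integrableOn_pow_mul_exp_neg_mul_mul hx m continuousOn_log_one_add
    isBigO_log_one_add_atTop
  have hinv := integrableOn_pow_mul_exp_neg_mul_mul hx n continuousOn_inv_one_add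
    isBigO_inv_one_add_atTop
  have hsub : IntegrableOn (fun z => n * (z ^ (n - 1) * exp (-x * z) * log (1 + z))
      - x * (z ^ n * exp (-x * z) * log (1 + z))) (Ioi 0) :=
    ((hlog (n - 1)).const_mul _).sub ((hlog n).const_mul x)
  have key := integral_Ioi_of_hasDerivAt_of_tendsto' hderiv (hsub.add hinv) hlim
  rw [integral_add hsub hinv, integral_sub ((hlog (n - 1)).const_mul _) ((hlog n).const_mul _),
    integral_const_mul, integral_const_mul] at key
  simp only [add_zero, log_one, mul_zero, sub_zero] at key
  rw [logMoment, logMoment, invMoment]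
  linarith

theorem invMoment_zero {x : ℝ} (hx : 0 < x) : invMoment x 0 = exp x * upperIncGamma 0 x := by
  rw [upperIncGamma_eq_mul_integral_one_add_rpow hx, rpow_zero, one_mul, ← mul_assoc,
    ← exp_add, add_neg_cancel, exp_zero, one_mul, invMoment]
  refine setIntegral_congr_fun measurableSet_Ioi fun z _ => ?_
  rw [zero_sub, rpow_neg_one, pow_zero, one_mul]

theorem invMoment_succ {x : ℝ} (hx : 0 < x) (k : ℕ) :
    invMoment x (k + 1) = k ! / x ^ (k + 1) - invMoment x k := by
  have hpow : IntegrableOn (fun z => z ^ k * exp (-x * z)) (Ioi 0) :=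
    integrableOn_Ioi_of_isBigO_rpow_mul_exp_neg (s := k) hx (by fun_prop)
      (by simp only [rpow_natCast]; exact isBigO_refl _ _)
  have hinv := integrableOn_pow_mul_exp_neg_mul_mul hx k continuousOn_inv_one_add
    isBigO_inv_one_add_atTop
  rw [← integral_pow_mul_exp_neg_mul_Ioi hx, invMoment, invMoment, ← integral_sub hpow hinv]
  refine setIntegral_congr_fun measurableSet_Ioi fun z hz => ?_
  have h1z : 1 + z ≠ 0 := by linarith [mem_Ioi.mp hz]
  field_simp
  ring

theorem invMoment_eq {x : ℝ} (hx : 0 < x) (k : ℕ) :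
    invMoment x k = k ! * exp x * upperIncGamma (-k) x := by
  induction k with
  | zero => simp [invMoment_zero hx]
  | succ k ih =>
    have hrec := upperIncGamma_add_one hx (-(k + 1 : ℕ))
    rw [show -((k + 1 : ℕ) : ℝ) + 1 = -k by push_cast; ring, rpow_neg hx.le, rpow_natCast] at hrec
    have hexp : exp x * exp (-x) = 1 := by rw [← exp_add, add_neg_cancel, exp_zero]
    rw [invMoment_succ hx, ih, Nat.factorial_succ]
    push_cast at hrec ⊢
    linear_combination (-(k ! * exp x)) * hrec - (k ! / x ^ (k + 1)) * hexp

theorem eq_factorial_div_mul_sum_of_mul_eq {x : ℝ} (hx : x ≠ 0) {a b : ℕ → ℝ}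
    (h : ∀ n, x * a n = n * a (n - 1) + b n) (n : ℕ) :
    a n = n ! / x ^ (n + 1) * ∑ k ∈ Finset.range (n + 1), x ^ k / k ! * b k := by
  induction n with
  | zero =>
    have h0 : x * a 0 = b 0 := by simpa using h 0
    rw [Finset.sum_range_one, ← h0, zero_add, pow_one, pow_zero, Nat.factorial_zero]
    field_simp
  | succ n ih =>
    have hn := h (n + 1)
    rw [Nat.add_sub_cancel, ih] at hn
    rw [Finset.sum_range_succ, Nat.factorial_succ]
    apply mul_left_cancel₀ hx
    rw [hn]
    push_cast
    field_simp
    ring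

theorem sum_upperIncGamma_reflect {x : ℝ} (hx : x ≠ 0) (n : ℕ) :
    ∑ ℓ ∈ Finset.Icc 1 (n + 1), upperIncGamma ((ℓ : ℝ) - n - 1) x / x ^ ℓ
      = (∑ k ∈ Finset.range (n + 1), x ^ k * upperIncGamma (-k) x) / x ^ (n + 1) := by
  have hIcc : Finset.Icc 1 (n + 1) = Finset.Ico (n + 1 + 1 - (n + 1)) (n + 1 + 1 - 0) := by
    ext; simp only [Finset.mem_Icc, Finset.mem_Ico]; omega
  rw [hIcc, ← Finset.sum_Ico_reflect _ 0 (Nat.le_succ _), Finset.sum_div, Finset.range_eq_Ico]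
  refine Finset.sum_congr rfl fun k hk => ?_
  have hkn : k ≤ n + 1 := (Finset.mem_Ico.mp hk).2.le
  rw [Nat.cast_sub hkn, eq_div_iff (pow_ne_zero _ hx), ← pow_sub_mul_pow x hkn, show ((n + 1 : ℕ) : ℝ) - k - n - 1 = -k by push_cast; ring]
  field_simp

/-- for `x > 0` and `n ≥ 0`,
`∫_0^∞ zⁿ e^{-xz} ln(1+z) dz = n! eˣ ∑_{ℓ=1}^{n+1} Γ(ℓ-n-1, x) / x^ℓ`. -/
theorem stmt_17 (x : ℝ) (hx : 0 < x) (n : ℕ) :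
    (∫ z in Set.Ioi (0 : ℝ), z ^ n * Real.exp (-x * z) * Real.log (1 + z)) =
      (Nat.factorial n : ℝ) * Real.exp x *
        ∑ ℓ ∈ Finset.Icc 1 (n + 1), upperIncGamma ((ℓ : ℝ) - n - 1) x / x ^ ℓ := by
  change logMoment x n = _
  rw [eq_factorial_div_mul_sum_of_mul_eq hx.ne' (mul_logMoment hx) n,
    sum_upperIncGamma_reflect hx.ne', Finset.mul_sum, Finset.sum_div, Finset.mul_sum]
  refine Finset.sum_congr rfl fun k _ => ?_
  rw [invMoment_eq hx]
  field_simp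
end
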